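/- arXiv:1509.07672 — 3 statements merged into one kernel-verified Lean document; each statement's English description precedes it below -/
import Mathlib

section
/- If β+γ>2, then ρ* = ∫₀¹ (xΦ'(x)/Φ(x)) μ(dx) is finite and ν_n = (1/n)Σ_{i=1}^n X_iΦ'(X_i)/Φ(X_i) converges 𝙿-almost surely to ρ* as n→∞. -/
open MeasureTheory ProbabilityTheory Filter Set Asymptotics Topology

/-!
Since `Φ ≥ p 0` on `[0, 1)`, the integrand `x Φ'(x) / Φ(x)` is at most `(p 0)⁻¹ ∑ k p_k x^k`,
so its `μ`-integral is bounded by `(p 0)⁻¹ ∑ k p_k m_k` with `m_k = ∫ x^k dμ`. Splitting at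
`1 - t` gives `m_k ≤ (1 - t)^k + μ[1 - t, 1]`; the choice `t = γ log k / k` turns this into
`m_k ≤ k^(-γ) + O((log k / k)^γ) = O(k^(ε - γ))` for every `ε > 0`. Hence `k p_k m_k` is
`O(k^(1 - β - γ + ε))`, which is summable because `β + γ > 2`. Once the integrand is integrable,
the almost sure convergence of `ν_n` is the strong law of large numbers.
-/

/-- `x Φ'(x) / Φ(x)` for `Φ x = ∑ p k x^k`: the mean of the tilted law `k ↦ p k x^k / Φ x`. -/
noncomputable def tiltedMean (p : ℕ → ℝ) (x : ℝ) : ℝ :=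
  (∑' k : ℕ, (k : ℝ) * p k * x ^ k) / ∑' k : ℕ, p k * x ^ k

section PowerSeries

variable {p : ℕ → ℝ} {x : ℝ}

theorem summable_mul_pow (hp_nonneg : ∀ k, 0 ≤ p k) (hp_le_one : ∀ k, p k ≤ 1)
    (hx : x ∈ Ico (0 : ℝ) 1) :
    Summable fun k : ℕ => p k * x ^ k :=
  (summable_geometric_of_lt_one hx.1 hx.2).of_nonneg_of_le
    (fun k => mul_nonneg (hp_nonneg k) (pow_nonneg hx.1 k))
    (fun k => mul_le_of_le_one_left (pow_nonneg hx.1 k) (hp_le_one k))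

theorem summable_natCast_mul_mul_pow (hp_nonneg : ∀ k, 0 ≤ p k) (hp_le_one : ∀ k, p k ≤ 1)
    (hx : x ∈ Ico (0 : ℝ) 1) : Summable fun k : ℕ => (k : ℝ) * p k * x ^ k := by
  have hgeom := summable_pow_mul_geometric_of_norm_lt_one 1
    (by rw [Real.norm_of_nonneg hx.1]; exact hx.2 : ‖x‖ < 1)
  refine hgeom.of_nonneg_of_le (fun k => by have := hp_nonneg k; have := hx.1; positivity)
    fun k => ?_
  rw [pow_one]
  have := pow_nonneg hx.1 k
  gcongr
  exact mul_le_of_le_one_right k.cast_nonneg (hp_le_one k)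

theorem le_tsum_mul_pow (hp_nonneg : ∀ k, 0 ≤ p k) (hp_le_one : ∀ k, p k ≤ 1)
    (hx : x ∈ Ico (0 : ℝ) 1) :
    p 0 ≤ ∑' k : ℕ, p k * x ^ k := by
  simpa using (summable_mul_pow hp_nonneg hp_le_one hx).le_tsum 0
    fun k _ => mul_nonneg (hp_nonneg k) (pow_nonneg hx.1 k)

theorem tiltedMean_nonneg (hp_nonneg : ∀ k, 0 ≤ p k) (hx : 0 ≤ x) : 0 ≤ tiltedMean p x :=
  div_nonneg (tsum_nonneg fun k => by have := hp_nonneg k; positivity)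
    (tsum_nonneg fun k => by have := hp_nonneg k; positivity)

theorem tendsto_tiltedMean (hp_nonneg : ∀ k, 0 ≤ p k) (hp_le_one : ∀ k, p k ≤ 1) (hp0 : 0 < p 0)
    (hx : x ∈ Ico (0 : ℝ) 1) :
    Tendsto (fun n => (∑ k ∈ Finset.range n, (k : ℝ) * p k * x ^ k) /
      ∑ k ∈ Finset.range n, p k * x ^ k) atTop (𝓝 (tiltedMean p x)) :=
  (summable_natCast_mul_mul_pow hp_nonneg hp_le_one hx).hasSum.tendsto_sum_nat.div
    (summable_mul_pow hp_nonneg hp_le_one hx).hasSum.tendsto_sum_nat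
    (hp0.trans_le (le_tsum_mul_pow hp_nonneg hp_le_one hx)).ne'

theorem ofReal_tiltedMean_le (hp_nonneg : ∀ k, 0 ≤ p k) (hp_le_one : ∀ k, p k ≤ 1) (hp0 : 0 < p 0)
    (hx : x ∈ Ico (0 : ℝ) 1) :
    ENNReal.ofReal (tiltedMean p x) ≤
      ENNReal.ofReal (p 0)⁻¹ * ∑' k : ℕ, ENNReal.ofReal (k * p k) * ENNReal.ofReal (x ^ k) := by
  have hle : tiltedMean p x ≤ (p 0)⁻¹ * ∑' k : ℕ, (k : ℝ) * p k * x ^ k := by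
    rw [tiltedMean, div_eq_inv_mul]
    gcongr
    · exact tsum_nonneg fun k => by have := hp_nonneg k; have := hx.1; positivity
    · exact le_tsum_mul_pow hp_nonneg hp_le_one hx
  calc ENNReal.ofReal (tiltedMean p x)
      ≤ ENNReal.ofReal ((p 0)⁻¹ * ∑' k : ℕ, (k : ℝ) * p k * x ^ k) := ENNReal.ofReal_le_ofReal hle
    _ = ENNReal.ofReal (p 0)⁻¹ * ∑' k : ℕ, ENNReal.ofReal (k * p k) * ENNReal.ofReal (x ^ k) := by
      rw [ENNReal.ofReal_mul (inv_nonneg.2 hp0.le), ENNReal.ofReal_tsum_of_nonneg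
        (fun k => by have := hp_nonneg k; have := hx.1; positivity)
        (summable_natCast_mul_mul_pow hp_nonneg hp_le_one hx)]
      congr 1
      refine tsum_congr fun k => ENNReal.ofReal_mul (by have := hp_nonneg k; positivity)

end PowerSeries

theorem one_sub_mul_log_div_pow_le {n : ℕ} (hn : 0 < n) {a : ℝ} (h : a * Real.log n / n ≤ 1) :
    (1 - a * Real.log n / n) ^ n ≤ (n : ℝ) ^ (-a) := by
  have hn' : (0 : ℝ) < n := by exact_mod_cast hn
  calc (1 - a * Real.log n / n) ^ n ≤ Real.exp (-(a * Real.log n / n)) ^ n := by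
        gcongr
        linarith [Real.add_one_le_exp (-(a * Real.log n / n))]
    _ = (n : ℝ) ^ (-a) := by
      rw [← Real.exp_nat_mul, Real.rpow_def_of_pos hn']
      congr 1
      field_simp

theorem tendsto_mul_log_div_nhdsGT_zero {a : ℝ} (ha : 0 < a) :
    Tendsto (fun n : ℕ => a * Real.log n / n) atTop (𝓝[>] 0) := by
  refine tendsto_nhdsWithin_iff.2 ⟨?_, ?_⟩
  · simpa [mul_div_assoc] using
      (Real.isLittleO_log_id_atTop.tendsto_div_nhds_zero.comp
        tendsto_natCast_atTop_atTop).const_mul a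
  · filter_upwards [eventually_gt_atTop 1] with n hn
    have : (1 : ℝ) < n := by exact_mod_cast hn
    exact div_pos (mul_pos ha (Real.log_pos this)) (by linarith)

theorem isBigO_mul_log_div_rpow {a γ ε : ℝ} (hγ : 0 < γ) (hε : 0 < ε) :
    (fun n : ℕ => (a * Real.log n / n) ^ γ) =O[atTop] fun n : ℕ => (n : ℝ) ^ (ε - γ) := by
  have hs : 0 < ε / γ := div_pos hε hγ
  have hlog : (fun n : ℕ => a * Real.log n / n) =O[atTop] fun n : ℕ => (n : ℝ) ^ (ε / γ - 1) := by
    refine (((isLittleO_log_rpow_atTop hs).isBigO.comp_tendsto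
      tendsto_natCast_atTop_atTop).const_mul_left a).mul (isBigO_refl (fun n : ℕ => (n : ℝ)⁻¹) _)
      |>.congr' (Eventually.of_forall fun n => by simp [div_eq_mul_inv]) ?_
    filter_upwards [eventually_gt_atTop 0] with n hn
    rw [Real.rpow_sub_one (by positivity), div_eq_mul_inv]
    rfl
  refine (hlog.rpow hγ.le (Eventually.of_forall fun n => by positivity)).congr_right fun n => ?_
  rw [← Real.rpow_mul n.cast_nonneg]
  congr 1
  field_simp

section Moments

variable {μ : Measure ℝ}

theorem ae_mem_Ico_of_isBigO {γ : ℝ} [IsFiniteMeasure μ] (hγ : 0 < γ)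
    (hsupp : μ (Icc (0 : ℝ) 1)ᶜ = 0)
    (htail : (fun t => μ.real (Icc (1 - t) 1)) =O[𝓝[>] 0] fun t => t ^ γ) :
    ∀ᵐ x ∂μ, x ∈ Ico (0 : ℝ) 1 := by
  have htail0 : Tendsto (fun t => μ.real (Icc (1 - t) 1)) (𝓝[>] 0) (𝓝 0) :=
    htail.trans_tendsto <| by
      simpa [Real.zero_rpow hγ.ne'] using
        ((Real.continuousAt_rpow_const 0 γ (Or.inr hγ.le)).tendsto.mono_left nhdsWithin_le_nhds)
  have hone : μ.real {1} ≤ 0 := ge_of_tendsto htail0 <| by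
    filter_upwards [self_mem_nhdsWithin] with t (ht : 0 < t)
    exact measureReal_mono (singleton_subset_iff.2 ⟨by linarith, le_rfl⟩)
  have hne : ∀ᵐ x ∂μ, x ≠ 1 :=
    measure_eq_zero_iff_ae_notMem.1 <|
      (measureReal_eq_zero_iff).1 (le_antisymm hone measureReal_nonneg)
  filter_upwards [measure_eq_zero_iff_ae_notMem.1 hsupp, hne] with x hx hx1
  rw [notMem_compl_iff] at hx
  exact ⟨hx.1, hx.2.lt_of_ne hx1⟩

variable [IsProbabilityMeasure μ]

theorem lintegral_ofReal_pow_le_one (hμ : ∀ᵐ x ∂μ, x ∈ Icc (0 : ℝ) 1) (k : ℕ) :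
    ∫⁻ x, ENNReal.ofReal (x ^ k) ∂μ ≤ 1 := by
  calc ∫⁻ x, ENNReal.ofReal (x ^ k) ∂μ ≤ ∫⁻ _, 1 ∂μ :=
        lintegral_mono_ae <| hμ.mono fun x hx => ENNReal.ofReal_le_one.2 (pow_le_one₀ hx.1 hx.2)
    _ = 1 := by simp

theorem toReal_lintegral_ofReal_pow_le (hμ : ∀ᵐ x ∂μ, x ∈ Icc (0 : ℝ) 1) (k : ℕ) {t : ℝ}
    (ht : t ≤ 1) :
    (∫⁻ x, ENNReal.ofReal (x ^ k) ∂μ).toReal ≤ (1 - t) ^ k + μ.real (Icc (1 - t) 1) := by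
  have hsplit : ∫⁻ x, ENNReal.ofReal (x ^ k) ∂μ ≤
      ∫⁻ x, ENNReal.ofReal ((1 - t) ^ k) + (Icc (1 - t) 1).indicator 1 x ∂μ := by
    refine lintegral_mono_ae (hμ.mono fun x hx => ?_)
    rcases le_or_gt x (1 - t) with h | h
    · exact le_add_right (ENNReal.ofReal_le_ofReal (pow_le_pow_left₀ hx.1 h k))
    · rw [indicator_of_mem (show x ∈ Icc (1 - t) 1 from ⟨h.le, hx.2⟩)]
      exact le_add_left (ENNReal.ofReal_le_one.2 (pow_le_one₀ hx.1 hx.2))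
  rw [lintegral_add_left measurable_const, lintegral_const,
    lintegral_indicator_one measurableSet_Icc, measure_univ, mul_one] at hsplit
  have hpow : 0 ≤ (1 - t) ^ k := pow_nonneg (by linarith) k
  calc (∫⁻ x, ENNReal.ofReal (x ^ k) ∂μ).toReal
      ≤ (ENNReal.ofReal ((1 - t) ^ k) + μ (Icc (1 - t) 1)).toReal :=
        ENNReal.toReal_mono (by finiteness) hsplit
    _ = (1 - t) ^ k + μ.real (Icc (1 - t) 1) := by
      rw [ENNReal.toReal_add ENNReal.ofReal_ne_top (measure_ne_top _ _), ENNReal.toReal_ofReal hpow]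
      rfl

theorem isBigO_toReal_lintegral_ofReal_pow {γ ε : ℝ} (hγ : 0 < γ) (hε : 0 < ε)
    (hμ : ∀ᵐ x ∂μ, x ∈ Icc (0 : ℝ) 1)
    (htail : (fun t => μ.real (Icc (1 - t) 1)) =O[𝓝[>] 0] fun t => t ^ γ) :
    (fun k : ℕ => (∫⁻ x, ENNReal.ofReal (x ^ k) ∂μ).toReal) =O[atTop]
      fun k : ℕ => (k : ℝ) ^ (ε - γ) := by
  set t : ℕ → ℝ := fun k => γ * Real.log k / k
  have ht : Tendsto t atTop (𝓝[>] 0) := tendsto_mul_log_div_nhdsGT_zero hγ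
  have hbound : ∀ᶠ k : ℕ in atTop, ‖(∫⁻ x, ENNReal.ofReal (x ^ k) ∂μ).toReal‖ ≤
      ‖(k : ℝ) ^ (-γ) + μ.real (Icc (1 - t k) 1)‖ := by
    filter_upwards [eventually_gt_atTop 0,
      (tendsto_nhdsWithin_iff.1 ht).1.eventually (gt_mem_nhds one_pos)] with k hk htk
    rw [Real.norm_of_nonneg ENNReal.toReal_nonneg,
      Real.norm_of_nonneg (add_nonneg (by positivity) measureReal_nonneg)]
    grw [toReal_lintegral_ofReal_pow_le hμ k htk.le, one_sub_mul_log_div_pow_le hk htk.le]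
  refine (IsBigO.of_bound' hbound).trans (IsBigO.add ?_
    ((htail.comp_tendsto ht).trans (isBigO_mul_log_div_rpow hγ hε)))
  refine IsBigO.of_bound' ?_
  filter_upwards [eventually_ge_atTop 1] with k hk
  have hk' : (1 : ℝ) ≤ k := by exact_mod_cast hk
  rw [Real.norm_of_nonneg (by positivity), Real.norm_of_nonneg (by positivity)]
  exact Real.rpow_le_rpow_of_exponent_le hk' (by linarith)

end Moments

theorem integrable_tiltedMean {μ : Measure ℝ} [IsProbabilityMeasure μ] {p : ℕ → ℝ}
    (hp_nonneg : ∀ k, 0 ≤ p k) (hp_le_one : ∀ k, p k ≤ 1) (hp0 : 0 < p 0)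
    (hμ : ∀ᵐ x ∂μ, x ∈ Ico (0 : ℝ) 1)
    (hsum : Summable fun k : ℕ => (k : ℝ) * p k * (∫⁻ x, ENNReal.ofReal (x ^ k) ∂μ).toReal) :
    Integrable (tiltedMean p) μ := by
  have hmeas : AEStronglyMeasurable (tiltedMean p) μ :=
    aestronglyMeasurable_of_tendsto_ae atTop
      (fun n => (Measurable.div (by fun_prop) (by fun_prop)).aestronglyMeasurable)
      (hμ.mono fun x hx => tendsto_tiltedMean hp_nonneg hp_le_one hp0 hx)
  refine ⟨hmeas, (hasFiniteIntegral_iff_ofReal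
    (hμ.mono fun x hx => tiltedMean_nonneg hp_nonneg hx.1)).2 ?_⟩
  have hmoment : ∀ k : ℕ, ∫⁻ x, ENNReal.ofReal (x ^ k) ∂μ ≠ ⊤ := fun k =>
    ne_top_of_le_ne_top ENNReal.one_ne_top
      (lintegral_ofReal_pow_le_one (hμ.mono fun x hx => Ico_subset_Icc_self hx) k)
  calc ∫⁻ x, ENNReal.ofReal (tiltedMean p x) ∂μ
      ≤ ∫⁻ x, ENNReal.ofReal (p 0)⁻¹ *
          ∑' k : ℕ, ENNReal.ofReal (k * p k) * ENNReal.ofReal (x ^ k) ∂μ :=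
        lintegral_mono_ae (hμ.mono fun x hx => ofReal_tiltedMean_le hp_nonneg hp_le_one hp0 hx)
    _ = ENNReal.ofReal (p 0)⁻¹ *
          ENNReal.ofReal (∑' k : ℕ, k * p k * (∫⁻ x, ENNReal.ofReal (x ^ k) ∂μ).toReal) := by
      rw [lintegral_const_mul _ (by fun_prop), lintegral_tsum (fun k => by fun_prop),
        ENNReal.ofReal_tsum_of_nonneg (fun k => by have := hp_nonneg k; positivity) hsum]
      congr 1
      refine tsum_congr fun k => ?_
      rw [lintegral_const_mul _ (by fun_prop),
        ENNReal.ofReal_mul (p := k * p k) (by have := hp_nonneg k; positivity),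
        ENNReal.ofReal_toReal (hmoment k)]
    _ < ⊤ := ENNReal.mul_lt_top ENNReal.ofReal_lt_top ENNReal.ofReal_lt_top

theorem summable_natCast_mul_mul_of_isBigO {p M : ℕ → ℝ} {β δ : ℝ}
    (hp : p =O[atTop] fun k : ℕ => (k : ℝ) ^ (-β))
    (hM : M =O[atTop] fun k : ℕ => (k : ℝ) ^ (-δ)) (hβδ : 2 < β + δ) :
    Summable fun k : ℕ => (k : ℝ) * p k * M k := by
  refine summable_of_isBigO_nat (Real.summable_nat_rpow.2 (by linarith : 1 - β - δ < -1))
    (((isBigO_refl (fun k : ℕ => (k : ℝ)) _).mul hp).mul hM |>.congr' EventuallyEq.rfl ?_)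
  filter_upwards [eventually_gt_atTop 0] with k hk
  rw [sub_eq_add_neg, sub_eq_add_neg, Real.rpow_add (by positivity), Real.rpow_add (by positivity),
    Real.rpow_one]

theorem ae_tendsto_average_comp {Ω E : Type*} [MeasurableSpace Ω] [MeasurableSpace E]
    {P : Measure Ω} {μ : Measure E} (X : ℕ → Ω → E) (hX : ∀ i, AEMeasurable (X i) P)
    (hlaw : ∀ i, P.map (X i) = μ) (hindep : Pairwise fun i j => IndepFun (X i) (X j) P)
    {f : E → ℝ} (hf : Integrable f μ) :
    ∀ᵐ ω ∂P, Tendsto (fun n : ℕ => (∑ i ∈ Finset.range n, f (X i ω)) / n) atTop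
      (𝓝 (∫ x, f x ∂μ)) := by
  set g := hf.1.mk f
  have hg : Measurable g := hf.1.stronglyMeasurable_mk.measurable
  have hfg : f =ᵐ[μ] g := hf.1.ae_eq_mk
  have hint : Integrable (g ∘ X 0) P :=
    Integrable.comp_aemeasurable (by rw [hlaw 0]; exact hf.congr hfg) (hX 0)
  have hident : ∀ i, IdentDistrib (g ∘ X i) (g ∘ X 0) P P := fun i =>
    IdentDistrib.comp ⟨hX i, hX 0, by rw [hlaw i, hlaw 0]⟩ hg
  have hmean : P[g ∘ X 0] = ∫ x, f x ∂μ := by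
    rw [integral_congr_ae hfg, ← hlaw 0,
      integral_map (hX 0) (by rw [hlaw 0]; exact hg.aestronglyMeasurable)]
    rfl
  have hfX : ∀ᵐ ω ∂P, ∀ i, f (X i ω) = g (X i ω) :=
    ae_all_iff.2 fun i => ae_of_ae_map (hX i) (by rw [hlaw i]; exact hfg)
  filter_upwards [strong_law_ae_real (fun i => g ∘ X i) hint
    (fun i j hij => (hindep hij).comp hg hg) hident, hfX] with ω hω hfω
  simp_rw [hfω, ← hmean]
  exact hω

theorem natural_density_lln_general
    (γ β α₁ α₂ : ℝ) (hγ : 0 < γ)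
    (hβγ : 2 < β + γ)
    (μ : Measure ℝ) [IsProbabilityMeasure μ]
    (hμsupp : μ (Set.Icc (0:ℝ) 1)ᶜ = 0)
    (hμreg : Tendsto (fun x : ℝ => (μ (Set.Icc (1 - x) 1)).toReal / (α₁ * x ^ γ))
      (nhdsWithin 0 (Set.Ioi 0)) (nhds 1))
    (p : ℕ → ℝ) (hp_nonneg : ∀ k, 0 ≤ p k) (hp0 : 0 < p 0) (hp_sum : ∑' k, p k = 1)
    (hp_tail : Tendsto (fun k : ℕ => p k / (α₂ * (k : ℝ) ^ (-β))) atTop (nhds 1))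
    (Φ G : ℝ → ℝ)
    (hΦ : ∀ x, Φ x = ∑' k : ℕ, p k * x ^ k)
    (hG : ∀ x, G x = (∑' k : ℕ, (k : ℝ) * p k * x ^ k) / Φ x)
    (ρstar : ℝ) (hρstar : ρstar = ∫ x, G x ∂μ)
    (Ω : Type*) [MeasurableSpace Ω] (Pr : Measure Ω)
    (X : ℕ → Ω → ℝ) (hXmeas : ∀ i, Measurable (X i))
    (hXlaw : ∀ i, Measure.map (X i) Pr = μ)
    (hXindep : iIndepFun X Pr)
    (νn : ℕ → Ω → ℝ)
    (hνn : ∀ n ω, νn n ω = (1 / (n : ℝ)) * ∑ i ∈ Finset.range n, G (X i ω)) :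
    (∫⁻ x, ENNReal.ofReal (G x) ∂μ) < ⊤ ∧
    ∀ᵐ ω ∂Pr, Tendsto (fun n : ℕ => νn n ω) atTop (nhds ρstar) := by
  have hp_summable : Summable p := by
    by_contra h
    simp [tsum_eq_zero_of_not_summable h] at hp_sum
  have hp_le_one : ∀ k, p k ≤ 1 := fun k => hp_sum ▸ hp_summable.le_tsum k fun j _ => hp_nonneg j
  have hG_eq : G = tiltedMean p := funext fun x => by rw [hG, hΦ]; rfl
  have htail : (fun t => μ.real (Icc (1 - t) 1)) =O[𝓝[>] 0] fun t => t ^ γ :=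
    (isEquivalent_of_tendsto_one hμreg).isBigO.trans (isBigO_const_mul_self α₁ _ _)
  have hp_isBigO : p =O[atTop] fun k : ℕ => (k : ℝ) ^ (-β) :=
    (isEquivalent_of_tendsto_one hp_tail).isBigO.trans (isBigO_const_mul_self α₂ _ _)
  have hμ := ae_mem_Ico_of_isBigO hγ hμsupp htail
  obtain ⟨ε, hε, hεβγ⟩ : ∃ ε, 0 < ε ∧ ε < β + γ - 2 := ⟨(β + γ - 2) / 2, by linarith, by linarith⟩
  have hmoment := isBigO_toReal_lintegral_ofReal_pow hγ hε
    (hμ.mono fun x hx => Ico_subset_Icc_self hx) htail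
  rw [← neg_sub] at hmoment
  have hint : Integrable G μ := hG_eq ▸ integrable_tiltedMean hp_nonneg hp_le_one hp0 hμ
    (summable_natCast_mul_mul_of_isBigO hp_isBigO hmoment (by linarith))
  refine ⟨hint.lintegral_lt_top, ?_⟩
  filter_upwards [ae_tendsto_average_comp X (fun i => (hXmeas i).aemeasurable) hXlaw
    (fun i j hij => hXindep.indepFun hij) hint] with ω hω
  simpa only [hνn, hρstar, one_div, inv_mul_eq_div] using hω

/-- **Natural density (Lemma 3.1).**  If `β + γ > 2`, then the critical density
`ρ* = ∫ x Φ'(x)/Φ(x) μ(dx)` is finite and `ν_n = (1/n) ∑_{i≤n} X_i Φ'(X_i)/Φ(X_i)`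
converges `𝙿`-almost surely to `ρ*`. -/
theorem natural_density_lln
    (γ β α₁ α₂ : ℝ) (hγ : 0 < γ) (hβ : 1 < β) (hα₁ : 0 < α₁) (hα₂ : 0 < α₂)
    (hβγ : 2 < β + γ)
    (μ : Measure ℝ) [IsProbabilityMeasure μ]
    (hμsupp : μ (Set.Icc (0:ℝ) 1)ᶜ = 0)
    (hμreg : Tendsto (fun x : ℝ => (μ (Set.Icc (1 - x) 1)).toReal / (α₁ * x ^ γ))
      (nhdsWithin 0 (Set.Ioi 0)) (nhds 1))
    (p : ℕ → ℝ) (hp_nonneg : ∀ k, 0 ≤ p k) (hp0 : 0 < p 0) (hp_sum : ∑' k, p k = 1)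
    (hp_tail : Tendsto (fun k : ℕ => p k / (α₂ * (k : ℝ) ^ (-β))) atTop (nhds 1))
    (Φ G : ℝ → ℝ)
    (hΦ : ∀ x, Φ x = ∑' k : ℕ, p k * x ^ k)
    (hG : ∀ x, G x = (∑' k : ℕ, (k : ℝ) * p k * x ^ k) / Φ x)
    (ρstar : ℝ) (hρstar : ρstar = ∫ x, G x ∂μ)
    (Ω : Type*) [MeasurableSpace Ω] (Pr : Measure Ω) [IsProbabilityMeasure Pr]
    (X : ℕ → Ω → ℝ) (hXmeas : ∀ i, Measurable (X i))
    (hXlaw : ∀ i, Measure.map (X i) Pr = μ)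
    (hXindep : iIndepFun X Pr)
    (νn : ℕ → Ω → ℝ)
    (hνn : ∀ n ω, νn n ω = (1 / (n : ℝ)) * ∑ i ∈ Finset.range n, G (X i ω)) :
    (∫⁻ x, ENNReal.ofReal (G x) ∂μ) < ⊤ ∧
    ∀ᵐ ω ∂Pr, Tendsto (fun n : ℕ => νn n ω) atTop (nhds ρstar) :=
  natural_density_lln_general γ β α₁ α₂ hγ hβγ μ hμsupp hμreg p hp_nonneg hp0 hp_sum hp_tail Φ G hΦ
    hG ρstar hρstar Ω Pr X hXmeas hXlaw hXindep νn hνn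
end

section
/- Let X be a random variable on [0,1] whose law μ satisfies μ([1−x,1]) ~ α₁x^γ as x↓0, and let Ψ:[0,1]→(0,∞) be continuous with Ψ(1)=1. Then 𝙴[X^r/Ψ(X)] ~ α₁Γ(γ+1)·r^{−γ} as r→∞. In particular (taking Ψ≡1), 𝙴[X^r] ~ α₁Γ(γ+1)·r^{−γ}. -/
/-!
By the layer-cake formula, `𝔼[X^r] = ∫₀¹ F(1 - t^{1/r}) dt` with `F y = μ([1 - y, 1])`.
Since `r (1 - t^{1/r})` increases to `-log t`, the regular variation `F y ~ α₁ y^γ` gives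
`r^γ F(1 - t^{1/r}) → α₁ (-log t)^γ`, dominated by `C (-log t)^γ`, and
`∫₀¹ (-log t)^γ dt = Γ(γ + 1)`. The weight `1/Ψ` is close to `1` near `x = 1`, while the part
of the moment coming from `[0, q]` with `q < 1` is `O(q^r) = o(r^{-γ})`.
-/

open MeasureTheory Filter Set Real Topology

lemma image_exp_neg_Ioi_zero : (fun v : ℝ => exp (-v)) '' Ioi 0 = Ioo 0 1 := by
  ext t
  constructor
  · rintro ⟨v, hv, rfl⟩
    exact ⟨exp_pos _, exp_lt_one_iff.2 (neg_neg_of_pos hv)⟩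
  · rintro ⟨h0, h1⟩
    exact ⟨-log t, neg_pos.2 (log_neg h0 h1), by simp [exp_log h0]⟩

lemma hasDerivWithinAt_exp_neg (v : ℝ) (s : Set ℝ) :
    HasDerivWithinAt (fun v : ℝ => exp (-v)) (-exp (-v)) s v := by
  simpa using (hasDerivAt_neg' v).exp.hasDerivWithinAt

lemma injOn_exp_neg (s : Set ℝ) : InjOn (fun v : ℝ => exp (-v)) s :=
  fun _ _ _ _ h => by simpa using exp_injective h

lemma integrableOn_neg_log_rpow {γ : ℝ} (hγ : -1 < γ) :
    IntegrableOn (fun t : ℝ => (-log t) ^ γ) (Ioo 0 1) := by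
  rw [← image_exp_neg_Ioi_zero, integrableOn_image_iff_integrableOn_abs_deriv_smul
    measurableSet_Ioi (fun v _ => hasDerivWithinAt_exp_neg v _) (injOn_exp_neg _)]
  refine (GammaIntegral_convergent (by linarith : 0 < γ + 1)).congr_fun (fun v _ => ?_)
    measurableSet_Ioi
  simp [abs_of_pos (exp_pos _)]

lemma integral_neg_log_rpow {γ : ℝ} (hγ : -1 < γ) :
    ∫ t in Ioo 0 1, (-log t) ^ γ = Gamma (γ + 1) := by
  rw [← image_exp_neg_Ioi_zero, integral_image_eq_integral_abs_deriv_smul measurableSet_Ioi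
    (fun v _ => hasDerivWithinAt_exp_neg v _) (injOn_exp_neg _),
    Gamma_eq_integral (by linarith)]
  refine setIntegral_congr_fun measurableSet_Ioi fun v _ => ?_
  simp [abs_of_pos (exp_pos _)]

lemma mul_one_sub_rpow_inv_le_neg_log {t r : ℝ} (ht : 0 < t) (hr : 0 < r) :
    r * (1 - t ^ r⁻¹) ≤ -log t :=
  calc r * (1 - t ^ r⁻¹) ≤ r * -(log t * r⁻¹) := by
        gcongr
        rw [rpow_def_of_pos ht]
        linarith [add_one_le_exp (log t * r⁻¹)]
    _ = -log t := by field_simp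

lemma tendsto_mul_one_sub_rpow_inv {t : ℝ} (ht : 0 < t) :
    Tendsto (fun r : ℝ => r * (1 - t ^ r⁻¹)) atTop (𝓝 (-log t)) := by
  refine ((tendsto_rpow_sub_one_log ht).comp tendsto_inv_atTop_nhdsGT_zero).neg.congr fun r => ?_
  simp only [Function.comp_apply, inv_inv]
  ring

lemma tendsto_rpow_mul_rpow_of_lt_one (γ : ℝ) {q : ℝ} (hq0 : 0 < q) (hq1 : q < 1) :
    Tendsto (fun r : ℝ => r ^ γ * q ^ r) atTop (𝓝 0) := by
  refine (tendsto_rpow_mul_exp_neg_mul_atTop_nhds_zero γ (-log q)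
    (neg_pos.2 (log_neg hq0 hq1))).congr fun r => ?_
  rw [rpow_def_of_pos hq0]
  ring_nf

section RegularVariation

variable {F : ℝ → ℝ} {γ α : ℝ}

lemma exists_le_mul_rpow_of_tendsto_div {B : ℝ} (hγ : 0 ≤ γ) (hα : 0 < α)
    (hFB : ∀ y, F y ≤ B) (hF : Tendsto (fun y => F y / (α * y ^ γ)) (𝓝[>] 0) (𝓝 1)) :
    ∃ C, ∀ y > 0, F y ≤ C * y ^ γ := by
  obtain ⟨δ, hδ, hsmall⟩ :=
    mem_nhdsGT_iff_exists_Ioo_subset.1 (hF.eventually (gt_mem_nhds one_lt_two))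
  refine ⟨max (2 * α) (|B| / δ ^ γ), fun y hy => ?_⟩
  have hyγ : 0 < y ^ γ := rpow_pos_of_pos hy γ
  rcases lt_or_ge y δ with hyδ | hyδ
  · have h2 : F y / (α * y ^ γ) < 2 := hsmall ⟨hy, hyδ⟩
    rw [div_lt_iff₀ (by positivity)] at h2
    nlinarith [le_max_left (2 * α) (|B| / δ ^ γ)]
  · have hδγ : 0 < δ ^ γ := rpow_pos_of_pos hδ γ
    calc F y ≤ |B| / δ ^ γ * δ ^ γ := by
          rw [div_mul_cancel₀ _ hδγ.ne']
          exact (hFB y).trans (le_abs_self B)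
      _ ≤ max (2 * α) (|B| / δ ^ γ) * y ^ γ := by
        gcongr
        · exact le_max_right _ _
        · exact hδ.le

lemma tendsto_rpow_mul_comp_one_sub_rpow_inv (hα : α ≠ 0)
    (hF : Tendsto (fun y => F y / (α * y ^ γ)) (𝓝[>] 0) (𝓝 1)) {t : ℝ} (ht0 : 0 < t)
    (ht1 : t < 1) :
    Tendsto (fun r : ℝ => r ^ γ * F (1 - t ^ r⁻¹)) atTop (𝓝 (α * (-log t) ^ γ)) := by
  have hpos : ∀ᶠ r : ℝ in atTop, 0 < 1 - t ^ r⁻¹ :=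
    (eventually_gt_atTop 0).mono fun r hr => sub_pos.2 (rpow_lt_one ht0.le ht1 (inv_pos.2 hr))
  have hzero : Tendsto (fun r : ℝ => 1 - t ^ r⁻¹) atTop (𝓝[>] 0) := by
    refine tendsto_nhdsWithin_iff.2 ⟨?_, hpos⟩
    simpa using
      ((continuousAt_const_rpow ht0.ne').tendsto.comp tendsto_inv_atTop_zero).const_sub 1
  have hlog : Tendsto (fun r : ℝ => (r * (1 - t ^ r⁻¹)) ^ γ) atTop (𝓝 ((-log t) ^ γ)) :=
    (tendsto_mul_one_sub_rpow_inv ht0).rpow_const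
      (Or.inl (neg_ne_zero.2 (log_neg ht0 ht1).ne))
  have hprod := (hF.comp hzero).mul (hlog.const_mul α)
  rw [one_mul] at hprod
  refine hprod.congr' ?_
  filter_upwards [eventually_gt_atTop 0, hpos] with r hr hy
  have hyγ : 0 < (1 - t ^ r⁻¹) ^ γ := rpow_pos_of_pos hy γ
  simp only [Function.comp_apply, mul_rpow hr.le hy.le]
  generalize 1 - t ^ r⁻¹ = y at hyγ ⊢
  field_simp

theorem tendsto_rpow_mul_integral_comp_one_sub_rpow_inv {C : ℝ} (hγ : 0 ≤ γ) (hα : α ≠ 0)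
    (hFm : Measurable F) (hF0 : ∀ y, 0 ≤ F y) (hFC : ∀ y > 0, F y ≤ C * y ^ γ)
    (hF : Tendsto (fun y => F y / (α * y ^ γ)) (𝓝[>] 0) (𝓝 1)) :
    Tendsto (fun r : ℝ => r ^ γ * ∫ t in Ioo 0 1, F (1 - t ^ r⁻¹)) atTop
      (𝓝 (α * Gamma (γ + 1))) := by
  have hC : 0 ≤ C := by simpa using (hF0 1).trans (hFC 1 one_pos)
  rw [← integral_neg_log_rpow (by linarith), ← integral_const_mul]
  simp_rw [← integral_const_mul]
  refine tendsto_integral_filter_of_dominated_convergence (fun t => C * (-log t) ^ γ)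
    (Eventually.of_forall fun r => ?_) ?_
    ((integrableOn_neg_log_rpow (by linarith)).const_mul C) ?_
  · exact (measurable_const.mul
      (hFm.comp (measurable_const.sub (measurable_id.pow_const _)))).aestronglyMeasurable
  · filter_upwards [eventually_gt_atTop 0] with r hr
    filter_upwards [ae_restrict_mem measurableSet_Ioo] with t ht
    have hy : 0 < 1 - t ^ r⁻¹ := sub_pos.2 (rpow_lt_one ht.1.le ht.2 (inv_pos.2 hr))
    rw [norm_of_nonneg (mul_nonneg (rpow_nonneg hr.le _) (hF0 _))]
    calc r ^ γ * F (1 - t ^ r⁻¹) ≤ r ^ γ * (C * (1 - t ^ r⁻¹) ^ γ) := by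
          gcongr
          exact hFC _ hy
      _ = C * (r * (1 - t ^ r⁻¹)) ^ γ := by rw [mul_rpow hr.le hy.le]; ring
      _ ≤ C * (-log t) ^ γ := by
        gcongr
        exact mul_one_sub_rpow_inv_le_neg_log ht.1 hr
  · filter_upwards [ae_restrict_mem measurableSet_Ioo] with t ht
    exact tendsto_rpow_mul_comp_one_sub_rpow_inv hα hF ht.1 ht.2

end RegularVariation

section MomentsOnUnitInterval

variable {μ : Measure ℝ} [IsFiniteMeasure μ]

lemma integrable_rpow_of_ae_mem_Icc (hμ : ∀ᵐ x ∂μ, x ∈ Icc (0 : ℝ) 1) {r : ℝ} (hr : 0 ≤ r) :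
    Integrable (fun x : ℝ => x ^ r) μ :=
  Integrable.of_bound (continuous_rpow_const hr).aestronglyMeasurable 1 <| by
    filter_upwards [hμ] with x hx
    rw [norm_of_nonneg (rpow_nonneg hx.1 r)]
    exact rpow_le_one hx.1 hx.2 hr

lemma integral_rpow_eq_integral_measureReal_Icc (hμ : ∀ᵐ x ∂μ, x ∈ Icc (0 : ℝ) 1) {r : ℝ}
    (hr : 0 < r) :
    ∫ x, x ^ r ∂μ = ∫ t in Ioo 0 1, μ.real (Icc (t ^ r⁻¹) 1) := by
  rw [(integrable_rpow_of_ae_mem_Icc hμ hr.le).integral_eq_integral_Ioc_meas_le (M := 1)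
      (hμ.mono fun x hx => rpow_nonneg hx.1 r) (hμ.mono fun x hx => rpow_le_one hx.1 hx.2 hr.le),
    integral_Ioc_eq_integral_Ioo]
  refine setIntegral_congr_fun measurableSet_Ioo fun t ht => ?_
  simp only [measureReal_def]
  refine congrArg _ (measure_congr (hμ.mono fun x hx => propext ?_))
  change t ≤ x ^ r ↔ x ∈ Icc (t ^ r⁻¹) 1
  rw [mem_Icc, rpow_inv_le_iff_of_pos ht.1.le hx.1 hr]
  exact ⟨fun h => ⟨h, hx.2⟩, And.left⟩

theorem tendsto_rpow_mul_integral_rpow {γ α : ℝ} (hγ : 0 ≤ γ) (hα : 0 < α)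
    (hμ : ∀ᵐ x ∂μ, x ∈ Icc (0 : ℝ) 1)
    (hμα : Tendsto (fun x => μ.real (Icc (1 - x) 1) / (α * x ^ γ)) (𝓝[>] 0) (𝓝 1)) :
    Tendsto (fun r : ℝ => r ^ γ * ∫ x, x ^ r ∂μ) atTop (𝓝 (α * Gamma (γ + 1))) := by
  have hFm : Measurable fun y : ℝ => μ.real (Icc (1 - y) 1) :=
    Monotone.measurable fun y y' h => measureReal_mono (Icc_subset_Icc_left (by linarith))
  obtain ⟨C, hC⟩ := exists_le_mul_rpow_of_tendsto_div hγ hα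
    (fun y => measureReal_mono (subset_univ _)) hμα
  refine (tendsto_rpow_mul_integral_comp_one_sub_rpow_inv hγ hα.ne' hFm
    (fun _ => measureReal_nonneg) hC hμα).congr' ?_
  filter_upwards [eventually_gt_atTop 0] with r hr
  simp only [integral_rpow_eq_integral_measureReal_Icc hμ hr, sub_sub_cancel]

lemma tendsto_zero_of_abs_le_mul_add {D a : ℝ → ℝ} {l : Filter ℝ} {L : ℝ}
    (ha : Tendsto a l (𝓝 L))
    (hD : ∀ ε > 0, ∃ b : ℝ → ℝ, Tendsto b l (𝓝 0) ∧ ∀ᶠ r in l, |D r| ≤ ε * a r + b r) :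
    Tendsto D l (𝓝 0) := by
  rw [Metric.tendsto_nhds]
  intro η hη
  obtain ⟨b, hb, hDb⟩ := hD (η / (2 * (|L| + 1))) (by positivity)
  filter_upwards [hDb, ha.eventually (gt_mem_nhds (lt_of_le_of_lt (le_abs_self L)
    (lt_add_one |L|))), hb.eventually (gt_mem_nhds (half_pos hη))] with r hr har hbr
  rw [Real.dist_eq, sub_zero]
  calc |D r| ≤ η / (2 * (|L| + 1)) * a r + b r := hr
    _ ≤ η / (2 * (|L| + 1)) * (|L| + 1) + b r := by gcongr
    _ < η := by field_simp; linarith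

theorem tendsto_rpow_mul_integral_rpow_mul {γ L B : ℝ} {φ : ℝ → ℝ}
    (hμ : ∀ᵐ x ∂μ, x ∈ Icc (0 : ℝ) 1) (hφm : AEStronglyMeasurable φ μ)
    (hφB : ∀ x ∈ Icc (0 : ℝ) 1, ‖φ x - 1‖ ≤ B) (hφ1 : Tendsto φ (𝓝[Icc 0 1] 1) (𝓝 1))
    (h : Tendsto (fun r : ℝ => r ^ γ * ∫ x, x ^ r ∂μ) atTop (𝓝 L)) :
    Tendsto (fun r : ℝ => r ^ γ * ∫ x, x ^ r * φ x ∂μ) atTop (𝓝 L) := by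
  have hB : 0 ≤ B := (norm_nonneg _).trans (hφB 1 ⟨zero_le_one, le_rfl⟩)
  have hint : ∀ r ≥ (0 : ℝ), Integrable (fun x => x ^ r * (φ x - 1)) μ := fun r hr =>
    (integrable_rpow_of_ae_mem_Icc hμ hr).mul_bdd (hφm.sub aestronglyMeasurable_const)
      (hμ.mono fun x hx => hφB x hx)
  suffices hD : Tendsto (fun r : ℝ => r ^ γ * ∫ x, x ^ r * (φ x - 1) ∂μ) atTop (𝓝 0) by
    refine (add_zero L ▸ h.add hD).congr' ?_
    filter_upwards [eventually_ge_atTop 0] with r hr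
    rw [← mul_add, ← integral_add (integrable_rpow_of_ae_mem_Icc hμ hr) (hint r hr)]
    simp only [mul_sub, mul_one, add_sub_cancel]
  refine tendsto_zero_of_abs_le_mul_add h fun ε hε => ?_
  obtain ⟨δ, hδ, hφδ⟩ := Metric.tendsto_nhdsWithin_nhds.1 hφ1 ε hε
  -- `φ` is `ε`-close to `1` on `(q, 1]`, and `x ^ r ≤ q ^ r` on `[0, q]`.
  set q := max (1 - δ) (1 / 2)
  have hq0 : 0 < q := lt_max_of_lt_right one_half_pos
  have hq1 : q < 1 := max_lt (by linarith) one_half_lt_one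
  refine ⟨fun r => B * μ.real univ * (r ^ γ * q ^ r),
    by simpa using (tendsto_rpow_mul_rpow_of_lt_one γ hq0 hq1).const_mul (B * μ.real univ), ?_⟩
  filter_upwards [eventually_gt_atTop 0] with r hr
  have hpt : ∀ᵐ x ∂μ, ‖x ^ r * (φ x - 1)‖ ≤ ε * x ^ r + B * q ^ r := by
    filter_upwards [hμ] with x hx
    have hxr : 0 ≤ x ^ r := rpow_nonneg hx.1 r
    rw [norm_mul, norm_of_nonneg hxr]
    rcases le_or_gt x q with hxq | hxq
    · have := mul_le_mul (rpow_le_rpow hx.1 hxq hr.le) (hφB x hx) (norm_nonneg _)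
        (rpow_nonneg hq0.le r)
      nlinarith [mul_nonneg hε.le hxr, rpow_nonneg hq0.le r]
    · have hφx : ‖φ x - 1‖ < ε := by
        rw [← dist_eq_norm]
        refine hφδ hx ?_
        rw [Real.dist_eq, abs_of_nonpos (by linarith [hx.2])]
        linarith [le_max_left (1 - δ) (1 / 2)]
      nlinarith [mul_nonneg hB (rpow_nonneg hq0.le r)]
  have hint' : Integrable (fun x => ε * x ^ r + B * q ^ r) μ :=
    ((integrable_rpow_of_ae_mem_Icc hμ hr.le).const_mul ε).add (integrable_const _)
  calc |r ^ γ * ∫ x, x ^ r * (φ x - 1) ∂μ| = r ^ γ * ‖∫ x, x ^ r * (φ x - 1) ∂μ‖ := by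
        rw [abs_mul, abs_of_pos (rpow_pos_of_pos hr γ), Real.norm_eq_abs]
    _ ≤ r ^ γ * ∫ x, (ε * x ^ r + B * q ^ r) ∂μ := by
        gcongr
        exact norm_integral_le_of_norm_le hint' hpt
    _ = ε * (r ^ γ * ∫ x, x ^ r ∂μ) + B * μ.real univ * (r ^ γ * q ^ r) := by
        rw [integral_add ((integrable_rpow_of_ae_mem_Icc hμ hr.le).const_mul ε)
          (integrable_const _), integral_const_mul, integral_const, smul_eq_mul]
        ring

end MomentsOnUnitInterval

lemma tendsto_div_mul_rpow_neg {f : ℝ → ℝ} {γ c : ℝ} (hc : c ≠ 0)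
    (h : Tendsto (fun r : ℝ => r ^ γ * f r) atTop (𝓝 c)) :
    Tendsto (fun r : ℝ => f r / (c * r ^ (-γ))) atTop (𝓝 1) := by
  refine (div_self hc ▸ h.div_const c).congr' ?_
  filter_upwards [eventually_gt_atTop 0] with r hr
  have hrγ : 0 < r ^ γ := rpow_pos_of_pos hr γ
  rw [rpow_neg hr.le]
  field_simp

/-- **Lemma A.2 (moments near the essential supremum).**  Let `X` have law `μ` on
`[0,1]` with `μ([1-x,1]) ~ α₁ x^γ` as `x ↓ 0`, and let `Ψ : [0,1] → (0,∞)` be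
continuous with `Ψ(1) = 1`.  Then `𝙴[X^r / Ψ(X)] ~ α₁ Γ(γ+1) r^{-γ}` as `r → ∞`;
in particular `𝙴[X^r] ~ α₁ Γ(γ+1) r^{-γ}`. -/
theorem moments_near_essential_supremum
    (γ α₁ : ℝ) (hγ : 0 < γ) (hα₁ : 0 < α₁)
    (μ : Measure ℝ) [IsProbabilityMeasure μ]
    (hμsupp : μ (Set.Icc (0:ℝ) 1)ᶜ = 0)
    (hμreg : Tendsto (fun x : ℝ => (μ (Set.Icc (1 - x) 1)).toReal / (α₁ * x ^ γ))
      (nhdsWithin 0 (Set.Ioi 0)) (nhds 1))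
    (Ψ : ℝ → ℝ) (hΨcont : ContinuousOn Ψ (Set.Icc 0 1))
    (hΨpos : ∀ x ∈ Set.Icc (0:ℝ) 1, 0 < Ψ x) (hΨ1 : Ψ 1 = 1) :
    Tendsto (fun r : ℝ => (∫ x, x ^ r / Ψ x ∂μ) /
        (α₁ * Real.Gamma (γ + 1) * r ^ (-γ))) atTop (nhds 1) ∧
    Tendsto (fun r : ℝ => (∫ x, x ^ r ∂μ) /
        (α₁ * Real.Gamma (γ + 1) * r ^ (-γ))) atTop (nhds 1) := by
  have hμ : ∀ᵐ x ∂μ, x ∈ Icc (0 : ℝ) 1 := ae_iff.2 hμsupp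
  have hmoment := tendsto_rpow_mul_integral_rpow hγ.le hα₁ hμ hμreg
  have hΨinv : ContinuousOn (fun x => (Ψ x)⁻¹) (Icc 0 1) :=
    hΨcont.inv₀ fun x hx => (hΨpos x hx).ne'
  obtain ⟨B, hB⟩ := isCompact_Icc.exists_bound_of_continuousOn (hΨinv.sub continuousOn_const)
  have hΨinv1 : Tendsto (fun x => (Ψ x)⁻¹) (𝓝[Icc 0 1] 1) (𝓝 1) := by
    simpa [hΨ1] using (hΨinv 1 ⟨zero_le_one, le_rfl⟩).tendsto
  have hweighted := tendsto_rpow_mul_integral_rpow_mul hμ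
    (Measure.restrict_eq_self_of_ae_mem hμ ▸ hΨinv.aestronglyMeasurable measurableSet_Icc)
    hB hΨinv1 hmoment
  have hc : α₁ * Gamma (γ + 1) ≠ 0 := (mul_pos hα₁ (Gamma_pos_of_pos (by linarith))).ne'
  simpa only [div_eq_mul_inv] using
    And.intro (tendsto_div_mul_rpow_neg hc hweighted) (tendsto_div_mul_rpow_neg hc hmoment)
end

section
/- Let (X_i)_{i≥1} be i.i.d. with law μ and set V_k^(n) := (Σ_{i=1}^n X_i^k)/(X_n^(1))^k for n≥1, k≥0, where X_n^(1) is the maximum of X₁,…,X_n. Then: (a) for every fixed n, the sequence k ↦ V_k^(n) is non-increasing; and (b) if (s_n) is a sequence of positive reals with s_n/(n^{1/γ}·log n) → ∞, then V_{s_n}^(n) → 1 in 𝙿-probability as n→∞. -/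
open MeasureTheory ProbabilityTheory Filter Set Topology

/-!
Write `M` for the sample maximum. Every ratio `X_i / M` lies in `[0, 1]`, so each term of
`V_k = ∑ (X_i / M)^k` is non-increasing in `k`.

For the limit, fix `K > 0` and put `r_n = (K / n)^(1/γ)`, `d_n = 2 log n / s_n`; the growth
assumption on `s_n` says exactly that `d_n = o(r_n)`. If `M ≥ 1 - r_n` and every `X_i` other
than the maximiser lies below `M - d_n`, then
`0 ≤ V - 1 ≤ n (1 - d_n)^(s_n) ≤ n e^(-d_n s_n) = 1/n`.
Otherwise either `M < 1 - r_n`, which has probability at most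
`exp (-n μ[1 - r_n, 1]) ≈ exp (-α₁ K)`, or some `X_i` falls into the window `[M_i - d_n, M_i]`,
where `M_i ≥ 1 - r_n` is the maximum of the other variables. As `X_i` is independent of `M_i`,
the latter has probability at most `n sup_{m ≥ 1 - r_n} μ[m - d_n, m]`. When `μ[1 - x, 1]` is
within a factor `1 ± δ` of `α₁ x^γ`, uniform continuity of `x ↦ x^γ` on `[0, 2]` bounds this
by `O(δ K)`. Let `n → ∞`, then `δ → 0` and `K → ∞`.
-/

noncomputable def powerSumRatio (x : ℕ → ℝ) (n : ℕ) (s : ℝ) : ℝ :=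
  (∑ i ∈ Finset.range n, x i ^ s) / (⨆ i ∈ Finset.range n, x i) ^ s

noncomputable def maxOfOthers (x : ℕ → ℝ) (n i : ℕ) : ℝ :=
  ⨆ j : ↥((Finset.range n).erase i), x j

theorem Finset.exists_mem_biSup_eq_of_nonneg {ι : Type*} {S : Finset ι} {f : ι → ℝ}
    (h : ∃ i ∈ S, 0 ≤ f i) : ∃ i₀ ∈ S, ⨆ i ∈ S, f i = f i₀ ∧ ∀ i ∈ S, f i ≤ f i₀ := by
  have h' : ∃ i ∈ S, sSup (∅ : Set ℝ) ≤ f i := by simpa using h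
  rw [Finset.ciSup_eq_max'_image f h']
  obtain ⟨i₀, hi₀, hmax⟩ := Finset.mem_image.1 (Finset.max'_mem (S.image f) _)
  exact ⟨i₀, hi₀, hmax.symm, fun i hi => hmax ▸ Finset.le_max' _ _ (Finset.mem_image_of_mem f hi)⟩

theorem antitone_sum_pow_div_pow {ι : Type*} (S : Finset ι) {y : ι → ℝ} {M : ℝ}
    (hy : ∀ i ∈ S, 0 ≤ y i ∧ y i ≤ M) :
    Antitone fun k : ℕ => (∑ i ∈ S, y i ^ k) / M ^ k := by
  intro k l hkl
  simp only [Finset.sum_div, ← div_pow]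
  refine Finset.sum_le_sum fun i hi => pow_le_pow_of_le_one ?_ ?_ hkl
  · exact div_nonneg (hy i hi).1 ((hy i hi).1.trans (hy i hi).2)
  · exact div_le_one_of_le₀ (hy i hi).2 ((hy i hi).1.trans (hy i hi).2)

theorem antitone_powerSumRatio_natCast {x : ℕ → ℝ} (hx : ∀ i, 0 ≤ x i) {n : ℕ} (hn : 1 ≤ n) :
    Antitone fun k : ℕ => powerSumRatio x n k := by
  obtain ⟨i₀, -, hM, hle⟩ := Finset.exists_mem_biSup_eq_of_nonneg
    ⟨0, Finset.mem_range.2 hn, hx 0⟩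
  simp only [powerSumRatio, Real.rpow_natCast, hM]
  exact antitone_sum_pow_div_pow _ fun i hi => ⟨hx i, hle i hi⟩

theorem abs_sum_rpow_div_rpow_sub_one_le {ι : Type*} [DecidableEq ι] {S : Finset ι}
    {y : ι → ℝ} {i₀ : ι} {d s : ℝ} (hi₀ : i₀ ∈ S) (hy : ∀ i ∈ S, 0 ≤ y i) (hpos : 0 < y i₀)
    (hle : y i₀ ≤ 1) (hd₀ : 0 ≤ d) (hd₁ : d ≤ 1) (hs : 0 ≤ s)
    (hgap : ∀ i ∈ S, i ≠ i₀ → y i < y i₀ - d) :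
    |(∑ i ∈ S, y i ^ s) / y i₀ ^ s - 1| ≤ S.card * (1 - d) ^ s := by
  rw [← Finset.add_sum_erase S _ hi₀, add_div, div_self (Real.rpow_pos_of_pos hpos s).ne',
    add_sub_cancel_left, Finset.sum_div,
    abs_of_nonneg (Finset.sum_nonneg fun i hi => by
      have := hy i (Finset.mem_of_mem_erase hi); positivity)]
  have hterm : ∀ i ∈ S.erase i₀, y i ^ s / y i₀ ^ s ≤ (1 - d) ^ s := by
    intro i hi
    obtain ⟨hne, hiS⟩ := Finset.mem_erase.1 hi
    rw [← Real.div_rpow (hy i hiS) hpos.le]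
    refine Real.rpow_le_rpow (div_nonneg (hy i hiS) hpos.le) ?_ hs
    rw [div_le_iff₀ hpos]
    nlinarith [hgap i hiS hne]
  calc ∑ i ∈ S.erase i₀, y i ^ s / y i₀ ^ s ≤ (S.erase i₀).card • (1 - d) ^ s :=
        Finset.sum_le_card_nsmul _ _ _ hterm
    _ ≤ S.card * (1 - d) ^ s := by
        rw [nsmul_eq_mul]
        exact mul_le_mul_of_nonneg_right (by exact_mod_cast Finset.card_erase_le)
          (Real.rpow_nonneg (by linarith) s)

theorem maxOfOthers_eq {x : ℕ → ℝ} {n i i₀ : ℕ} (hi₀ : i₀ ∈ Finset.range n) (hne : i₀ ≠ i)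
    (hle : ∀ j ∈ Finset.range n, x j ≤ x i₀) : maxOfOthers x n i = x i₀ := by
  have hmem : i₀ ∈ (Finset.range n).erase i := Finset.mem_erase.2 ⟨hne, hi₀⟩
  have : Nonempty ↥((Finset.range n).erase i) := ⟨⟨i₀, hmem⟩⟩
  unfold maxOfOthers
  exact le_antisymm (ciSup_le fun j => hle j (Finset.mem_of_mem_erase j.2))
    (le_ciSup (f := fun j : ↥((Finset.range n).erase i) => x j) (Set.finite_range _).bddAbove
      ⟨i₀, hmem⟩)

theorem abs_powerSumRatio_sub_one_le {x : ℕ → ℝ} {n : ℕ} {r d s : ℝ}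
    (hx : ∀ i, x i ∈ Icc 0 1) (hr : r < 1) (hd₀ : 0 ≤ d) (hd₁ : d ≤ 1) (hs : 0 ≤ s)
    (hlarge : ∃ i < n, 1 - r ≤ x i)
    (hnoTie : ∀ i < n, ¬ (maxOfOthers x n i ∈ Icc (1 - r) 1 ∧
      x i ∈ Icc (maxOfOthers x n i - d) (maxOfOthers x n i))) :
    |powerSumRatio x n s - 1| ≤ n * (1 - d) ^ s := by
  obtain ⟨i₁, hi₁, hx₁⟩ := hlarge
  obtain ⟨i₀, hi₀, hM, hle⟩ := Finset.exists_mem_biSup_eq_of_nonneg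
    ⟨i₁, Finset.mem_range.2 hi₁, (hx i₁).1⟩
  have hx₀ : 1 - r ≤ x i₀ := hx₁.trans (hle i₁ (Finset.mem_range.2 hi₁))
  have hgap : ∀ i ∈ Finset.range n, i ≠ i₀ → x i < x i₀ - d := by
    intro i hi hne
    have hothers := maxOfOthers_eq hi₀ hne.symm hle
    by_contra! hge
    exact hnoTie i (Finset.mem_range.1 hi)
      ⟨hothers ▸ ⟨hx₀, (hx i₀).2⟩, hothers ▸ ⟨hge, hle i hi⟩⟩
  rw [powerSumRatio, hM]
  simpa using abs_sum_rpow_div_rpow_sub_one_le hi₀ (fun i _ => (hx i).1)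
    (by linarith) (hx i₀).2 hd₀ hd₁ hs hgap

section IID

variable {Ω : Type*} [MeasurableSpace Ω] {P : Measure Ω} {μ : Measure ℝ} {X : ℕ → Ω → ℝ}

theorem ae_forall_mem_of_map_eq {s : Set ℝ} (hXmeas : ∀ i, Measurable (X i))
    (hXlaw : ∀ i, P.map (X i) = μ) (hs : μ sᶜ = 0) : ∀ᵐ ω ∂P, ∀ i, X i ω ∈ s :=
  ae_all_iff.2 fun i => ae_of_ae_map (hXmeas i).aemeasurable (by rw [hXlaw i]; exact hs)

theorem measure_forall_lt_le_exp [IsProbabilityMeasure μ] (hXmeas : ∀ i, Measurable (X i))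
    (hXlaw : ∀ i, P.map (X i) = μ) (hXindep : iIndepFun X P) (n : ℕ) (t : ℝ) :
    P {ω | ∀ i < n, X i ω < t} ≤ ENNReal.ofReal (Real.exp (-(n * μ.real (Ici t)))) := by
  have hset : {ω | ∀ i < n, X i ω < t} = ⋂ i ∈ Finset.range n, X i ⁻¹' Iio t := by
    ext; simp
  have hlaw : ∀ i, P (X i ⁻¹' Iio t) = ENNReal.ofReal (1 - μ.real (Ici t)) := fun i => by
    rw [← Measure.map_apply (hXmeas i) measurableSet_Iio, hXlaw i, ← compl_Ici,
      ← probReal_compl_eq_one_sub measurableSet_Ici, ofReal_measureReal]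
  have hp : 0 ≤ 1 - μ.real (Ici t) := sub_nonneg.2 measureReal_le_one
  rw [hset, hXindep.measure_inter_preimage_eq_mul _ fun _ _ => measurableSet_Iio,
    Finset.prod_congr rfl fun i _ => hlaw i, Finset.prod_const, Finset.card_range,
    ← ENNReal.ofReal_pow hp]
  refine ENNReal.ofReal_le_ofReal ?_
  calc (1 - μ.real (Ici t)) ^ n ≤ Real.exp (-μ.real (Ici t)) ^ n :=
        pow_le_pow_left₀ hp (Real.one_sub_le_exp_neg _) n
    _ = Real.exp (-(n * μ.real (Ici t))) := by rw [← Real.exp_nat_mul, mul_neg]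

theorem ProbabilityTheory.IndepFun.measure_mem_Icc_sub_le [IsProbabilityMeasure P] {f g : Ω → ℝ}
    (hf : Measurable f) (hg : Measurable g) (hfg : IndepFun g f P) (hflaw : P.map f = μ)
    {T : Set ℝ} (hT : MeasurableSet T) {d : ℝ} {C : ENNReal}
    (hC : ∀ m ∈ T, μ (Icc (m - d) m) ≤ C) :
    P {ω | g ω ∈ T ∧ f ω ∈ Icc (g ω - d) (g ω)} ≤ C := by
  set S : Set (ℝ × ℝ) := {p | p.1 ∈ T ∧ p.2 ∈ Icc (p.1 - d) p.1}
  have hS : MeasurableSet S := (measurable_fst hT).inter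
    ((measurableSet_le (by fun_prop) measurable_snd).inter
      (measurableSet_le measurable_snd measurable_fst))
  have hslice : ∀ m, P.map f (Prod.mk m ⁻¹' S) ≤ C := by
    intro m
    by_cases hm : m ∈ T
    · exact hflaw ▸ (measure_mono fun y hy => hy.2).trans (hC m hm)
    · simp [S, hm]
  calc P {ω | g ω ∈ T ∧ f ω ∈ Icc (g ω - d) (g ω)} = P.map (fun ω => (g ω, f ω)) S :=
        (Measure.map_apply (hg.prodMk hf) hS).symm
    _ = ∫⁻ m, P.map f (Prod.mk m ⁻¹' S) ∂(P.map g) := by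
        rw [(indepFun_iff_map_prod_eq_prod_map_map hg.aemeasurable hf.aemeasurable).1 hfg,
          Measure.prod_apply hS]
    _ ≤ ∫⁻ _, C ∂(P.map g) := lintegral_mono hslice
    _ = C := by
        have := Measure.isProbabilityMeasure_map (μ := P) hg.aemeasurable
        simp

theorem measurable_maxOfOthers (hXmeas : ∀ i, Measurable (X i)) (n i : ℕ) :
    Measurable fun ω => maxOfOthers (X · ω) n i :=
  Measurable.iSup fun j => hXmeas j

theorem ProbabilityTheory.iIndepFun.indepFun_maxOfOthers (hXmeas : ∀ i, Measurable (X i))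
    (hXindep : iIndepFun X P) (n i : ℕ) :
    IndepFun (fun ω => maxOfOthers (X · ω) n i) (X i) P :=
  (hXindep.indepFun_finset ((Finset.range n).erase i) {i}
    (Finset.disjoint_singleton_right.2 (Finset.notMem_erase i _)) hXmeas).comp
    (Measurable.iSup fun j => measurable_pi_apply j)
    (measurable_pi_apply (⟨i, Finset.mem_singleton_self i⟩ : ↥({i} : Finset ℕ)))

theorem measure_abs_powerSumRatio_sub_one_gt_le [IsProbabilityMeasure P]
    [IsProbabilityMeasure μ] (hX01 : ∀ᵐ ω ∂P, ∀ i, X i ω ∈ Icc 0 1)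
    (hXmeas : ∀ i, Measurable (X i)) (hXlaw : ∀ i, P.map (X i) = μ) (hXindep : iIndepFun X P)
    {n : ℕ} {r d s ε b : ℝ} (hr : r < 1) (hd₀ : 0 ≤ d) (hd₁ : d ≤ 1) (hs : 0 ≤ s)
    (hε : n * (1 - d) ^ s ≤ ε) (hwindow : ∀ m ∈ Icc (1 - r) 1, μ.real (Icc (m - d) m) ≤ b) :
    P {ω | ε < |powerSumRatio (X · ω) n s - 1|} ≤
      ENNReal.ofReal (Real.exp (-(n * μ.real (Ici (1 - r))))) + n * ENNReal.ofReal b := by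
  set tie : ℕ → Set Ω := fun i => {ω | maxOfOthers (X · ω) n i ∈ Icc (1 - r) 1 ∧
    X i ω ∈ Icc (maxOfOthers (X · ω) n i - d) (maxOfOthers (X · ω) n i)}
  have hsub : ∀ᵐ ω ∂P, ω ∈ {ω | ε < |powerSumRatio (X · ω) n s - 1|} →
      ω ∈ {ω | ∀ i < n, X i ω < 1 - r} ∪ ⋃ i ∈ Finset.range n, tie i := by
    filter_upwards [hX01] with ω hω hbad
    by_contra hgood
    simp only [mem_union, mem_ofPred_eq, mem_iUnion, Finset.mem_range, not_or, not_forall,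
      not_lt, not_exists, tie] at hgood
    obtain ⟨⟨i, hi, hlarge⟩, hnoTie⟩ := hgood
    exact (not_lt.2 ((abs_powerSumRatio_sub_one_le hω hr hd₀ hd₁ hs ⟨i, hi, hlarge⟩
      hnoTie).trans hε)) hbad
  have htie : ∀ i, P (tie i) ≤ ENNReal.ofReal b := fun i =>
    (hXindep.indepFun_maxOfOthers hXmeas n i).measure_mem_Icc_sub_le (hXmeas i)
      (measurable_maxOfOthers hXmeas n i) (hXlaw i) measurableSet_Icc fun m hm => by
        rw [← ofReal_measureReal]; exact ENNReal.ofReal_le_ofReal (hwindow m hm)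
  calc P {ω | ε < |powerSumRatio (X · ω) n s - 1|}
      ≤ P ({ω | ∀ i < n, X i ω < 1 - r} ∪ ⋃ i ∈ Finset.range n, tie i) := measure_mono_ae hsub
    _ ≤ P {ω | ∀ i < n, X i ω < 1 - r} + ∑ i ∈ Finset.range n, P (tie i) :=
        (measure_union_le _ _).trans (add_le_add_right (measure_biUnion_finset_le _ _) _)
    _ ≤ _ := add_le_add (measure_forall_lt_le_exp hXmeas hXlaw hXindep n _)
        (by simpa using Finset.sum_le_card_nsmul (Finset.range n) _ _ fun i _ => htie i)

end IID

section RegularVariation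

variable {μ : Measure ℝ} {γ α₁ δ x₀ : ℝ}

theorem exists_abs_measureReal_Icc_sub_le (hα₁ : 0 < α₁)
    (hμreg : Tendsto (fun x : ℝ => (μ (Icc (1 - x) 1)).toReal / (α₁ * x ^ γ)) (𝓝[>] 0) (𝓝 1))
    (hδ : 0 < δ) :
    ∃ x₀ > 0, ∀ x ∈ Ioc 0 x₀, |μ.real (Icc (1 - x) 1) - α₁ * x ^ γ| ≤ δ * (α₁ * x ^ γ) := by
  obtain ⟨x₀, hx₀, hsub⟩ :=
    mem_nhdsGT_iff_exists_Ioc_subset.1 (Metric.tendsto_nhds.1 hμreg δ hδ)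
  refine ⟨x₀, hx₀, fun x hx => ?_⟩
  have hA : 0 < α₁ * x ^ γ := mul_pos hα₁ (Real.rpow_pos_of_pos hx.1 γ)
  have hclose : dist ((μ (Icc (1 - x) 1)).toReal / (α₁ * x ^ γ)) 1 < δ := hsub hx
  rw [Real.dist_eq, div_sub_one hA.ne', abs_div, abs_of_pos hA, div_lt_iff₀ hA] at hclose
  exact hclose.le

theorem le_measureReal_Ioc_of_abs_sub_le [IsFiniteMeasure μ] (hγ : 0 < γ)
    (htail : ∀ x ∈ Ioc 0 x₀, |μ.real (Icc (1 - x) 1) - α₁ * x ^ γ| ≤ δ * (α₁ * x ^ γ))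
    {a : ℝ} (ha : a ∈ Icc 0 x₀) : (1 - δ) * (α₁ * a ^ γ) ≤ μ.real (Ioc (1 - a) 1) := by
  rcases ha.1.eq_or_lt with rfl | ha₀
  · simp [Real.zero_rpow hγ.ne']
  have hcont : Tendsto (fun x : ℝ => (1 - δ) * (α₁ * x ^ γ)) (𝓝[<] a)
      (𝓝 ((1 - δ) * (α₁ * a ^ γ))) :=
    (((Real.continuous_rpow_const hγ.le).tendsto a).const_mul α₁ |>.const_mul (1 - δ)).mono_left
      nhdsWithin_le_nhds
  refine le_of_tendsto hcont ?_
  filter_upwards [Ioo_mem_nhdsLT ha₀] with x hx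
  calc (1 - δ) * (α₁ * x ^ γ) ≤ μ.real (Icc (1 - x) 1) := by
        linarith [(abs_sub_le_iff.1 (htail x ⟨hx.1, hx.2.le.trans ha.2⟩)).2]
    _ ≤ μ.real (Ioc (1 - a) 1) := measureReal_mono (Icc_subset_Ioc (by linarith [hx.2]) le_rfl)

theorem measureReal_Icc_le_of_abs_sub_le [IsFiniteMeasure μ] (hγ : 0 < γ) (hα₁ : 0 ≤ α₁)
    (hδ : 0 ≤ δ)
    (htail : ∀ x ∈ Ioc 0 x₀, |μ.real (Icc (1 - x) 1) - α₁ * x ^ γ| ≤ δ * (α₁ * x ^ γ))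
    {a d : ℝ} (ha : 0 ≤ a) (hd : 0 < d) (hadx : a + d ≤ x₀) :
    μ.real (Icc (1 - (a + d)) (1 - a)) ≤
      α₁ * ((a + d) ^ γ - a ^ γ) + 2 * δ * (α₁ * (a + d) ^ γ) := by
  have hsplit : Icc (1 - (a + d)) (1 - a) = Icc (1 - (a + d)) 1 \ Ioc (1 - a) 1 := by
    ext x
    simp only [mem_Icc, Set.mem_sdiff, mem_Ioc, not_and_or, not_lt, not_le]
    constructor
    · rintro ⟨h₁, h₂⟩
      exact ⟨⟨h₁, by linarith⟩, Or.inl h₂⟩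
    · rintro ⟨⟨h₁, h₂⟩, h₃ | h₃⟩
      · exact ⟨h₁, h₃⟩
      · exact absurd h₂ (not_le.2 h₃)
  have hupper := (abs_sub_le_iff.1 (htail (a + d) ⟨by linarith, hadx⟩)).1
  have hlower := le_measureReal_Ioc_of_abs_sub_le hγ htail ⟨ha, by linarith⟩
  have hmono : δ * (α₁ * a ^ γ) ≤ δ * (α₁ * (a + d) ^ γ) := by
    gcongr
    linarith
  rw [hsplit, measureReal_sdiff (Ioc_subset_Icc_self.trans (Icc_subset_Icc (by linarith) le_rfl))
    measurableSet_Ioc]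
  linarith

theorem measureReal_Icc_sub_le_of_abs_sub_le [IsFiniteMeasure μ] (hγ : 0 < γ) (hα₁ : 0 ≤ α₁)
    (hδ : 0 ≤ δ)
    (htail : ∀ x ∈ Ioc 0 x₀, |μ.real (Icc (1 - x) 1) - α₁ * x ^ γ| ≤ δ * (α₁ * x ^ γ))
    {r d : ℝ} (hr : 0 < r) (hd : 0 < d) (hdr : d ≤ r) (hrx : 2 * r ≤ x₀)
    (hinc : ∀ a ∈ Icc 0 r, (a + d) ^ γ - a ^ γ ≤ δ * r ^ γ) :
    ∀ m ∈ Icc (1 - r) 1, μ.real (Icc (m - d) m) ≤ (1 + 2 ^ (γ + 1)) * δ * α₁ * r ^ γ := by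
  intro m hm
  have ha : 1 - m ∈ Icc 0 r := ⟨by linarith [hm.2], by linarith [hm.1]⟩
  have hwin := measureReal_Icc_le_of_abs_sub_le hγ hα₁ hδ htail ha.1 hd (by linarith [ha.2])
  have hcr : (1 - m + d) ^ γ ≤ 2 ^ γ * r ^ γ := by
    rw [← Real.mul_rpow two_pos.le hr.le]
    exact Real.rpow_le_rpow (by linarith [ha.1]) (by linarith [ha.2]) hγ.le
  rw [show 1 - (1 - m + d) = m - d by ring, sub_sub_cancel] at hwin
  calc μ.real (Icc (m - d) m)
      ≤ α₁ * (δ * r ^ γ) + 2 * δ * (α₁ * (2 ^ γ * r ^ γ)) :=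
        hwin.trans (by gcongr; exact hinc _ ha)
    _ = (1 + 2 ^ (γ + 1)) * δ * α₁ * r ^ γ := by
        rw [Real.rpow_add two_pos, Real.rpow_one]; ring

end RegularVariation

theorem exists_rpow_add_sub_rpow_le {γ : ℝ} (hγ : 0 ≤ γ) {η : ℝ} (hη : 0 < η) :
    ∃ ρ ∈ Ioc (0 : ℝ) 1, ∀ r > 0, ∀ a ∈ Icc 0 r, ∀ d ∈ Icc 0 (ρ * r),
      (a + d) ^ γ - a ^ γ ≤ η * r ^ γ := by
  obtain ⟨ρ, hρ, hunif⟩ := Metric.uniformContinuousOn_iff.1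
    ((isCompact_Icc (a := (0 : ℝ)) (b := 2)).uniformContinuousOn_of_continuous
      (Real.continuous_rpow_const hγ).continuousOn) η hη
  refine ⟨min (ρ / 2) 1, ⟨by positivity, min_le_right _ _⟩, fun r hr a ha d hd => ?_⟩
  have hθ : d / r ≤ min (ρ / 2) 1 := by rw [div_le_iff₀ hr]; exact hd.2
  have hθ₀ : 0 ≤ d / r := div_nonneg hd.1 hr.le
  have ht : a / r ∈ Icc (0 : ℝ) 1 := ⟨div_nonneg ha.1 hr.le, (div_le_one hr).2 ha.2⟩
  have hclose := hunif (a / r + d / r)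
    ⟨by linarith [ht.1], by linarith [ht.2, min_le_right (ρ / 2) 1]⟩ (a / r)
    ⟨ht.1, by linarith [ht.2]⟩ (by
      rw [Real.dist_eq, add_sub_cancel_left, abs_of_nonneg hθ₀]
      linarith [min_le_left (ρ / 2) 1])
  have hscale : ∀ t, 0 ≤ t → t ^ γ = r ^ γ * (t / r) ^ γ := fun t ht => by
    rw [Real.div_rpow ht hr.le, mul_div_cancel₀ _ (Real.rpow_pos_of_pos hr γ).ne']
  rw [hscale (a + d) (add_nonneg ha.1 hd.1), hscale a ha.1, ← mul_sub, add_div, mul_comm η]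
  exact mul_le_mul_of_nonneg_left ((le_abs_self _).trans (Real.dist_eq _ _ ▸ hclose.le))
    (Real.rpow_nonneg hr.le γ)

theorem tendsto_two_mul_log_div_div_rpow {γ K : ℝ} (hK : 0 < K) {s : ℕ → ℝ}
    (hs : ∀ n, 0 < s n)
    (hL : Tendsto (fun n : ℕ => s n / ((n : ℝ) ^ (1 / γ) * Real.log n)) atTop atTop) :
    Tendsto (fun n : ℕ => 2 * Real.log n / s n / (K / n) ^ (1 / γ)) atTop (𝓝 0) := by
  have h := hL.inv_tendsto_atTop.const_mul (2 / K ^ (1 / γ))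
  rw [mul_zero] at h
  refine h.congr' ?_
  filter_upwards [eventually_ge_atTop 2] with n hn
  have hlog : 0 < Real.log n := Real.log_pos (by exact_mod_cast hn)
  have hn₀ : (0 : ℝ) < n := by positivity
  have : 0 < (n : ℝ) ^ (1 / γ) := Real.rpow_pos_of_pos hn₀ _
  have : 0 < K ^ (1 / γ) := Real.rpow_pos_of_pos hK _
  have := hs n
  rw [Pi.inv_apply, Real.div_rpow hK.le hn₀.le]
  field_simp

theorem natCast_mul_one_sub_rpow_le_inv {n : ℕ} {s : ℝ} (hs : 0 < s)
    (hd : 2 * Real.log n / s ≤ 1) : (n : ℝ) * (1 - 2 * Real.log n / s) ^ s ≤ (n : ℝ)⁻¹ := by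
  rcases n.eq_zero_or_pos with rfl | hn
  · simp
  have hn₀ : (0 : ℝ) < n := Nat.cast_pos.2 hn
  calc (n : ℝ) * (1 - 2 * Real.log n / s) ^ s
      ≤ n * Real.exp (-(2 * Real.log n / s)) ^ s := by
        gcongr
        exact Real.one_sub_le_exp_neg _
    _ = n * ((n : ℝ) ^ 2)⁻¹ := by
        rw [← Real.exp_mul, neg_mul, div_mul_cancel₀ _ hs.ne', Real.exp_neg,
          show 2 * Real.log n = Real.log ((n : ℝ) ^ 2) by rw [Real.log_pow]; norm_num,
          Real.exp_log (by positivity)]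
    _ = (n : ℝ)⁻¹ := by field_simp

section Convergence

variable {Ω : Type*} [MeasurableSpace Ω] {P : Measure Ω} [IsProbabilityMeasure P]
  {μ : Measure ℝ} [IsProbabilityMeasure μ] {X : ℕ → Ω → ℝ} {γ α₁ : ℝ} {s : ℕ → ℝ}

theorem eventually_measure_abs_powerSumRatio_sub_one_gt_le (hγ : 0 < γ) (hα₁ : 0 < α₁)
    (hμreg : Tendsto (fun x : ℝ => (μ (Icc (1 - x) 1)).toReal / (α₁ * x ^ γ)) (𝓝[>] 0) (𝓝 1))
    (hX01 : ∀ᵐ ω ∂P, ∀ i, X i ω ∈ Icc 0 1) (hXmeas : ∀ i, Measurable (X i))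
    (hXlaw : ∀ i, P.map (X i) = μ) (hXindep : iIndepFun X P) (hs : ∀ n, 0 < s n)
    (hL : Tendsto (fun n : ℕ => s n / ((n : ℝ) ^ (1 / γ) * Real.log n)) atTop atTop)
    {ε K δ : ℝ} (hε : 0 < ε) (hK : 0 < K) (hδ : 0 < δ) (hδ₂ : δ ≤ 1 / 2) :
    ∀ᶠ n in atTop, P {ω | ε < |powerSumRatio (X · ω) n (s n) - 1|} ≤
      ENNReal.ofReal (Real.exp (-(α₁ * K / 2))) +
        ENNReal.ofReal ((1 + 2 ^ (γ + 1)) * δ * α₁ * K) := by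
  obtain ⟨x₀, hx₀, htail⟩ := exists_abs_measureReal_Icc_sub_le hα₁ hμreg hδ
  obtain ⟨ρ, ⟨hρ₀, hρ₁⟩, hρ⟩ := exists_rpow_add_sub_rpow_le hγ.le hδ
  set r : ℕ → ℝ := fun n => (K / n) ^ (1 / γ)
  set d : ℕ → ℝ := fun n => 2 * Real.log n / s n
  have hr : Tendsto r atTop (𝓝 0) :=
    (tendsto_const_div_atTop_nhds_zero_nat K).rpow_const_nhds_zero (by positivity)
  filter_upwards [eventually_ge_atTop 2, hr.eventually (ge_mem_nhds (half_pos hx₀)),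
    hr.eventually (gt_mem_nhds one_pos),
    (tendsto_two_mul_log_div_div_rpow hK hs hL).eventually (ge_mem_nhds hρ₀),
    (tendsto_inv_atTop_zero.comp tendsto_natCast_atTop_atTop).eventually (ge_mem_nhds hε)]
    with n hn hrx₀ hr₁ hdr hinv
  have hn₀ : (0 : ℝ) < n := by positivity
  have hr₀ : 0 < r n := by positivity
  have hnr : n * r n ^ γ = K := by
    rw [← Real.rpow_mul (by positivity), one_div_mul_cancel hγ.ne', Real.rpow_one]
    field_simp
  have hd₀ : 0 < d n := div_pos (mul_pos two_pos (Real.log_pos (by exact_mod_cast hn))) (hs n)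
  have hdρ : d n ≤ ρ * r n := (div_le_iff₀ hr₀).1 hdr
  have hdr' : d n ≤ r n := hdρ.trans (mul_le_of_le_one_left hr₀.le hρ₁)
  have hwindow := measureReal_Icc_sub_le_of_abs_sub_le hγ hα₁.le hδ.le htail hr₀ hd₀ hdr'
    (by linarith) fun a ha => hρ (r n) hr₀ a ha (d n) ⟨hd₀.le, hdρ⟩
  have htop : (1 - δ) * (α₁ * r n ^ γ) ≤ μ.real (Ici (1 - r n)) := by
    have hlow := (abs_sub_le_iff.1 (htail (r n) ⟨hr₀, by linarith⟩)).2
    linarith [measureReal_mono (μ := μ) (Icc_subset_Ici_self : Icc (1 - r n) 1 ⊆ Ici (1 - r n))]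
  refine (measure_abs_powerSumRatio_sub_one_gt_le hX01 hXmeas hXlaw hXindep hr₁ hd₀.le
    (hdr'.trans hr₁.le) (hs n).le
    ((natCast_mul_one_sub_rpow_le_inv (hs n) (hdr'.trans hr₁.le)).trans hinv) hwindow).trans
    (add_le_add (ENNReal.ofReal_le_ofReal (Real.exp_le_exp.2 ?_)) ?_)
  · have hK' : n * ((1 - δ) * (α₁ * r n ^ γ)) = (1 - δ) * α₁ * K := by rw [← hnr]; ring
    nlinarith [mul_le_mul_of_nonneg_left htop hn₀.le,
      mul_nonneg (mul_nonneg (sub_nonneg.2 hδ₂) hα₁.le) hK.le]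
  · rw [← ENNReal.ofReal_natCast, ← ENNReal.ofReal_mul hn₀.le, ← hnr]
    exact ENNReal.ofReal_le_ofReal (le_of_eq (by ring))

theorem tendsto_measure_abs_powerSumRatio_sub_one_gt (hγ : 0 < γ) (hα₁ : 0 < α₁)
    (hμreg : Tendsto (fun x : ℝ => (μ (Icc (1 - x) 1)).toReal / (α₁ * x ^ γ)) (𝓝[>] 0) (𝓝 1))
    (hX01 : ∀ᵐ ω ∂P, ∀ i, X i ω ∈ Icc 0 1) (hXmeas : ∀ i, Measurable (X i))
    (hXlaw : ∀ i, P.map (X i) = μ) (hXindep : iIndepFun X P) (hs : ∀ n, 0 < s n)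
    (hL : Tendsto (fun n : ℕ => s n / ((n : ℝ) ^ (1 / γ) * Real.log n)) atTop atTop)
    {ε : ℝ} (hε : 0 < ε) :
    Tendsto (fun n => P {ω | ε < |powerSumRatio (X · ω) n (s n) - 1|}) atTop (𝓝 0) := by
  refine ENNReal.tendsto_nhds_zero.2 fun τ hτ => ?_
  obtain ⟨t, -, ht₀, htτ⟩ := ENNReal.lt_iff_exists_real_btwn.1 hτ
  have ht : 0 < t := ENNReal.ofReal_pos.1 ht₀
  obtain ⟨K, hK, hKt⟩ : ∃ K > 0, Real.exp (-(α₁ * K / 2)) < t / 2 :=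
    ((eventually_gt_atTop 0).and ((Real.tendsto_exp_neg_atTop_nhds_zero.comp
      ((tendsto_id.const_mul_atTop hα₁).atTop_div_const two_pos)).eventually
        (gt_mem_nhds (half_pos ht)))).exists
  have hsmall : Tendsto (fun δ : ℝ => (1 + 2 ^ (γ + 1)) * δ * α₁ * K) (𝓝[>] 0) (𝓝 0) := by
    simpa using (((tendsto_id (x := 𝓝 (0 : ℝ))).const_mul (1 + 2 ^ (γ + 1))).mul_const α₁
      |>.mul_const K).mono_left nhdsWithin_le_nhds
  obtain ⟨δ, ⟨hδ, hδ₂⟩, hδt⟩ := (Filter.Eventually.and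
    (Ioo_mem_nhdsGT (show (0 : ℝ) < 1 / 2 by norm_num))
    (hsmall.eventually (gt_mem_nhds (half_pos ht)))).exists
  filter_upwards [eventually_measure_abs_powerSumRatio_sub_one_gt_le hγ hα₁ hμreg hX01 hXmeas
    hXlaw hXindep hs hL hε hK hδ hδ₂.le] with n hn
  calc _ ≤ _ := hn
    _ = ENNReal.ofReal (Real.exp (-(α₁ * K / 2)) + (1 + 2 ^ (γ + 1)) * δ * α₁ * K) :=
        (ENNReal.ofReal_add (Real.exp_pos _).le (by positivity)).symm
    _ ≤ ENNReal.ofReal t := ENNReal.ofReal_le_ofReal (by linarith)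
    _ ≤ τ := htτ.le

end Convergence

/-- **Lemma A.3(i).**  Let `(X_i)` be i.i.d. with law `μ` on `[0,1]`, regularly varying
at `1` with index `γ`, and set `V_k^{(n)} = (∑_{i<n} X_i^k)/(X_n^{(1)})^k` where
`X_n^{(1)}` is the maximum of `X_1, …, X_n`.  Then almost surely, for each fixed
`n ≥ 1`, the sequence `k ↦ V_k^{(n)}` is non-increasing; and if `s_n ≫ n^{1/γ} log n`
then `V_{s_n}^{(n)} → 1` in `𝙿`-probability. -/
theorem V_monotone_and_converges
    (γ α₁ : ℝ) (hγ : 0 < γ) (hα₁ : 0 < α₁)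
    (μ : Measure ℝ) [IsProbabilityMeasure μ]
    (hμsupp : μ (Set.Icc (0:ℝ) 1)ᶜ = 0)
    (hμreg : Tendsto (fun x : ℝ => (μ (Set.Icc (1 - x) 1)).toReal / (α₁ * x ^ γ))
      (nhdsWithin 0 (Set.Ioi 0)) (nhds 1))
    (Ω : Type*) [MeasurableSpace Ω] (Pr : Measure Ω) [IsProbabilityMeasure Pr]
    (X : ℕ → Ω → ℝ) (hXmeas : ∀ i, Measurable (X i))
    (hXlaw : ∀ i, Measure.map (X i) Pr = μ)
    (hXindep : iIndepFun X Pr)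
    (V : ℕ → ℝ → Ω → ℝ)
    (hV : ∀ n s ω, V n s ω =
      (∑ i ∈ Finset.range n, X i ω ^ s) / (⨆ i ∈ Finset.range n, X i ω) ^ s) :
    (∀ᵐ ω ∂Pr, ∀ n : ℕ, 1 ≤ n → Antitone (fun k : ℕ => V n k ω)) ∧
    ∀ s : ℕ → ℝ, (∀ n, 0 < s n) →
      Tendsto (fun n : ℕ => s n / ((n : ℝ) ^ (1/γ) * Real.log n)) atTop atTop →
      ∀ ε > (0:ℝ),
        Tendsto (fun n : ℕ => Pr {ω | ε < |V n (s n) ω - 1|}) atTop (nhds 0) := by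
  have hX01 : ∀ᵐ ω ∂Pr, ∀ i, X i ω ∈ Icc (0 : ℝ) 1 := ae_forall_mem_of_map_eq hXmeas hXlaw hμsupp
  have hV' : ∀ n s ω, V n s ω = powerSumRatio (X · ω) n s := hV
  refine ⟨?_, fun s hs hL ε hε => ?_⟩
  · filter_upwards [hX01] with ω hω n hn
    simpa only [hV'] using antitone_powerSumRatio_natCast (fun i => (hω i).1) hn
  · simpa only [hV'] using tendsto_measure_abs_powerSumRatio_sub_one_gt hγ hα₁ hμreg hX01
      hXmeas hXlaw hXindep hs hL hε
end
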